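/- arXiv:2405.13406 — 4 statements merged into one kernel-verified Lean document; each statement's English description precedes it below -/
import Mathlib

section
/- For every 1-Lipschitz curve γ : [a,b] → ℝⁿ and every Borel set E ⊆ ℝⁿ, the variation of the charge [γ] satisfies |[γ]|(E) ≤ ∫_{γ⁻¹(E)} |γ̇| dλ¹; in particular Var([γ]) ≤ L(γ), the length of γ. -/
open MeasureTheory Set
open scoped ENNReal

abbrev Charge (n : ℕ) :=
  MeasureTheory.VectorMeasure (EuclideanSpace ℝ (Fin n)) (EuclideanSpace ℝ (Fin n))

noncomputable def chargeVariation {n : ℕ} (μ : Charge n) (E : Set (EuclideanSpace ℝ (Fin n))) :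
    ℝ≥0∞ :=
  ⨆ (s : ℕ → Set (EuclideanSpace ℝ (Fin n))) (_ : Pairwise (Function.onFun Disjoint s))
    (_ : ∀ k, MeasurableSet (s k)) (_ : ∀ k, s k ⊆ E), ∑' k, (‖μ (s k)‖₊ : ℝ≥0∞)

lemma curve_preimage_measurable {n : ℕ} {a b : ℝ} {γ : ℝ → EuclideanSpace ℝ (Fin n)}
    (hγ : LipschitzOnWith 1 γ (Icc a b)) {A : Set (EuclideanSpace ℝ (Fin n))}
    (hA : MeasurableSet A) : MeasurableSet (Icc a b ∩ γ ⁻¹' A) := by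
  have h1 : MeasurableSet ((fun t : Icc a b => γ t) ⁻¹' A) :=
    (hγ.continuousOn.restrict.measurable) hA
  have h2 : Icc a b ∩ γ ⁻¹' A = Subtype.val '' ((fun t : Icc a b => γ t) ⁻¹' A) := by
    ext t
    constructor
    · rintro ⟨ht, hA'⟩; exact ⟨⟨t, ht⟩, hA', rfl⟩
    · rintro ⟨⟨u, hu⟩, hA', rfl⟩; exact ⟨hu, hA'⟩
  rw [h2]
  exact (measurableSet_Icc).subtype_image h1

/-- for a 1-Lipschitz curve `γ : [a,b] → ℝⁿ` with a.e. derivative `γ'`, the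
charge `[γ]` (whose components are the push-forwards `γ_#(γ̇ₖ·λ¹)`, i.e.
`[γ](A) = ∫_{γ⁻¹(A) ∩ [a,b]} γ̇ dλ¹`) satisfies `|[γ]|(E) ≤ ∫_{γ⁻¹(E)} |γ̇| dλ¹` for every
Borel set `E`; in particular `Var([γ]) ≤ L(γ)`. -/
theorem curve_charge_variation_le {n : ℕ} (a b : ℝ) (hab : a ≤ b)
    (γ : ℝ → EuclideanSpace ℝ (Fin n)) (hγ : LipschitzOnWith 1 γ (Icc a b))
    (γ' : ℝ → EuclideanSpace ℝ (Fin n)) (hγ'meas : Measurable γ')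
    (hderiv : ∀ᵐ t ∂(volume.restrict (Icc a b)), HasDerivAt γ (γ' t) t)
    (ν : Charge n)
    (hν : ∀ A : Set (EuclideanSpace ℝ (Fin n)), MeasurableSet A →
      ν A = ∫ t in Icc a b ∩ γ ⁻¹' A, γ' t) :
    (∀ E : Set (EuclideanSpace ℝ (Fin n)), MeasurableSet E →
      chargeVariation ν E ≤ ∫⁻ t in Icc a b ∩ γ ⁻¹' E, ‖γ' t‖₊) ∧
    chargeVariation ν Set.univ ≤ ∫⁻ t in Icc a b, ‖γ' t‖₊ := by
  have key : ∀ E : Set (EuclideanSpace ℝ (Fin n)), MeasurableSet E →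
      chargeVariation ν E ≤ ∫⁻ t in Icc a b ∩ γ ⁻¹' E, ‖γ' t‖₊ := by
    intro E hE
    unfold chargeVariation
    refine iSup_le fun s => iSup_le fun hdisj => iSup_le fun hmeas => iSup_le fun hsub => ?_
    -- each term is bounded by the lintegral over T k := Icc a b ∩ γ ⁻¹' (s k)
    set T : ℕ → Set ℝ := fun k => Icc a b ∩ γ ⁻¹' (s k) with hT
    have hTmeas : ∀ k, MeasurableSet (T k) := fun k => curve_preimage_measurable hγ (hmeas k)
    have hTdisj : Pairwise (Function.onFun Disjoint T) := by
      intro i j hij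
      exact (Disjoint.preimage γ (hdisj hij)).mono inter_subset_right inter_subset_right
    have step1 : ∀ k, (‖ν (s k)‖₊ : ℝ≥0∞) ≤ ∫⁻ t in T k, ‖γ' t‖₊ := by
      intro k
      rw [hν (s k) (hmeas k)]
      exact enorm_integral_le_lintegral_enorm _
    calc ∑' k, (‖ν (s k)‖₊ : ℝ≥0∞) ≤ ∑' k, ∫⁻ t in T k, ‖γ' t‖₊ :=
          ENNReal.tsum_le_tsum step1
      _ = ∫⁻ t in ⋃ k, T k, ‖γ' t‖₊ :=
          (lintegral_iUnion hTmeas hTdisj _).symm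
      _ ≤ ∫⁻ t in Icc a b ∩ γ ⁻¹' E, ‖γ' t‖₊ := by
          apply lintegral_mono_set
          refine iUnion_subset fun k => inter_subset_inter_right _ ?_
          exact preimage_mono (hsub k)
  refine ⟨key, ?_⟩
  have := key Set.univ MeasurableSet.univ
  simpa using this
end

section
/- For a 1-Lipschitz curve γ : [a,b] → ℝⁿ, the equality Var([γ]) = L(γ) holds if and only if |[γ]|(A) = ∫_{γ⁻¹(A)} |γ̇| dλ¹ for every Borel set A ⊆ ℝⁿ. -/
open MeasureTheory Set
open scoped ENNReal

/-- for a 1-Lipschitz curve `γ : [a,b] → ℝⁿ`, `Var([γ]) = L(γ)` holds if and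
only if `|[γ]|(A) = ∫_{γ⁻¹(A)} |γ̇| dλ¹` for every Borel set `A`. -/
theorem curve_charge_variation_eq_iff {n : ℕ} (a b : ℝ) (hab : a ≤ b)
    (γ : ℝ → EuclideanSpace ℝ (Fin n)) (hγ : LipschitzOnWith 1 γ (Icc a b))
    (γ' : ℝ → EuclideanSpace ℝ (Fin n)) (hγ'meas : Measurable γ')
    (hderiv : ∀ᵐ t ∂(volume.restrict (Icc a b)), HasDerivAt γ (γ' t) t)
    (ν : Charge n)
    (hν : ∀ A : Set (EuclideanSpace ℝ (Fin n)), MeasurableSet A →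
      ν A = ∫ t in Icc a b ∩ γ ⁻¹' A, γ' t) :
    chargeVariation ν Set.univ = ∫⁻ t in Icc a b, ‖γ' t‖₊ ↔
    ∀ A : Set (EuclideanSpace ℝ (Fin n)), MeasurableSet A →
      chargeVariation ν A = ∫⁻ t in Icc a b ∩ γ ⁻¹' A, ‖γ' t‖₊ := by
  -- measurability of `Icc a b ∩ γ ⁻¹' B`
  have hmeasB : ∀ B : Set (EuclideanSpace ℝ (Fin n)), MeasurableSet B →
      MeasurableSet (Icc a b ∩ γ ⁻¹' B) := by
    intro B hB
    have hcont : Continuous ((Icc a b).restrict γ) :=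
      continuousOn_iff_continuous_restrict.1 hγ.continuousOn
    have himg : Subtype.val '' (((Icc a b).restrict γ) ⁻¹' B) = Icc a b ∩ γ ⁻¹' B := by
      ext x
      constructor
      · rintro ⟨⟨y, hy⟩, hyB, rfl⟩; exact ⟨hy, hyB⟩
      · rintro ⟨hx, hxB⟩; exact ⟨⟨x, hx⟩, hxB, rfl⟩
    rw [← himg]
    exact MeasurableSet.subtype_image measurableSet_Icc (hcont.measurable hB)
  -- `le_iSup`-style lemma for `chargeVariation`
  have hle : ∀ (E : Set (EuclideanSpace ℝ (Fin n))) (s : ℕ → Set (EuclideanSpace ℝ (Fin n))),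
      Pairwise (Function.onFun Disjoint s) → (∀ k, MeasurableSet (s k)) → (∀ k, s k ⊆ E) →
      ∑' k, (‖ν (s k)‖₊ : ℝ≥0∞) ≤ chargeVariation ν E := by
    intro E s h1 h2 h3
    exact le_iSup_of_le s <| le_iSup_of_le h1 <| le_iSup_of_le h2 <| le_iSup_of_le h3 le_rfl
  -- upper bound : `chargeVariation ν A ≤ ∫⁻ t in Icc a b ∩ γ ⁻¹' A, ‖γ' t‖₊`
  have hupper : ∀ A : Set (EuclideanSpace ℝ (Fin n)), MeasurableSet A →
      chargeVariation ν A ≤ ∫⁻ t in Icc a b ∩ γ ⁻¹' A, ‖γ' t‖₊ := by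
    intro A hA
    refine iSup_le fun s => iSup_le fun hdisj => iSup_le fun hmeas => iSup_le fun hsub => ?_
    have hEdisj : Pairwise (Function.onFun Disjoint fun k => Icc a b ∩ γ ⁻¹' (s k)) := by
      intro i j hij
      exact (Set.disjoint_left.2 fun x hx hx' =>
        ((hdisj hij).le_bot ⟨hx.2, hx'.2⟩ : False))
    calc ∑' k, (‖ν (s k)‖₊ : ℝ≥0∞)
        ≤ ∑' k, ∫⁻ t in Icc a b ∩ γ ⁻¹' (s k), ‖γ' t‖₊ := by
          refine ENNReal.tsum_le_tsum fun k => ?_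
          rw [hν (s k) (hmeas k)]
          exact enorm_integral_le_lintegral_enorm _
      _ = ∫⁻ t in ⋃ k, Icc a b ∩ γ ⁻¹' (s k), ‖γ' t‖₊ :=
          (lintegral_iUnion (fun k => hmeasB (s k) (hmeas k)) hEdisj _).symm
      _ ≤ ∫⁻ t in Icc a b ∩ γ ⁻¹' A, ‖γ' t‖₊ := by
          refine lintegral_mono_set (Set.iUnion_subset fun k => ?_)
          exact Set.inter_subset_inter le_rfl (Set.preimage_mono (hsub k))
  -- finiteness of the total integral
  have hfin : (∫⁻ t in Icc a b, ‖γ' t‖₊) ≠ ∞ := by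
    have h0 : (volume.restrict (Icc a b)) (Ioo a b)ᶜ = 0 := by
      rw [Measure.restrict_apply measurableSet_Ioo.compl]
      refine measure_mono_null (fun x hx => ?_) (Set.Finite.measure_zero
        ((Set.finite_singleton b).insert a) volume)
      rcases hx with ⟨hx1, hx2⟩
      rcases eq_or_lt_of_le hx2.1 with h | h
      · exact Or.inl h.symm
      rcases eq_or_lt_of_le hx2.2 with h' | h'
      · exact Or.inr (by simp [h'])
      · exact absurd ⟨h, h'⟩ hx1
    have hIoo : ∀ᵐ t ∂volume.restrict (Icc a b), t ∈ Ioo a b := by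
      rw [ae_iff]; exact h0
    have hae : ∀ᵐ t ∂volume.restrict (Icc a b), (‖γ' t‖₊ : ℝ≥0∞) ≤ 1 := by
      filter_upwards [hderiv, hIoo] with t ht htI
      have hnorm := ht.le_of_lipschitzOn (Icc_mem_nhds htI.1 htI.2) hγ
      have h1 : ‖γ' t‖₊ ≤ 1 := by
        rw [← NNReal.coe_le_coe, coe_nnnorm]; simpa using hnorm
      exact_mod_cast h1
    refine ne_top_of_le_ne_top ?_ (lintegral_mono_ae hae)
    simp [Real.volume_Icc]
  -- splitting the integral
  have hsplit : ∀ A : Set (EuclideanSpace ℝ (Fin n)), MeasurableSet A →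
      (∫⁻ t in Icc a b ∩ γ ⁻¹' A, ‖γ' t‖₊) + (∫⁻ t in Icc a b ∩ γ ⁻¹' Aᶜ, ‖γ' t‖₊)
        = ∫⁻ t in Icc a b, ‖γ' t‖₊ := by
    intro A hA
    have hdisj : Disjoint (Icc a b ∩ γ ⁻¹' A) (Icc a b ∩ γ ⁻¹' Aᶜ) := by
      refine Set.disjoint_left.2 fun x hx hx' => hx'.2 hx.2
    rw [← lintegral_union (hmeasB Aᶜ hA.compl) hdisj]
    congr 1
    rw [← Set.inter_union_distrib_left, ← Set.preimage_union, Set.union_compl_self,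
      Set.preimage_univ, Set.inter_univ]
  -- superadditivity over `A, Aᶜ`
  have hsuper : ∀ A : Set (EuclideanSpace ℝ (Fin n)), MeasurableSet A →
      chargeVariation ν Set.univ ≤ chargeVariation ν A + chargeVariation ν Aᶜ := by
    intro A hA
    refine iSup_le fun s => iSup_le fun hdisj => iSup_le fun hmeas => iSup_le fun _ => ?_
    have hd1 : Pairwise (Function.onFun Disjoint fun k => s k ∩ A) := fun i j hij =>
      (hdisj hij).mono Set.inter_subset_left Set.inter_subset_left
    have hd2 : Pairwise (Function.onFun Disjoint fun k => s k ∩ Aᶜ) := fun i j hij =>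
      (hdisj hij).mono Set.inter_subset_left Set.inter_subset_left
    calc ∑' k, (‖ν (s k)‖₊ : ℝ≥0∞)
        ≤ ∑' k, ((‖ν (s k ∩ A)‖₊ : ℝ≥0∞) + (‖ν (s k ∩ Aᶜ)‖₊ : ℝ≥0∞)) := by
          refine ENNReal.tsum_le_tsum fun k => ?_
          have hdAB : Disjoint (s k ∩ A) (s k ∩ Aᶜ) :=
            Set.disjoint_left.2 fun x hx hx' => hx'.2 hx.2
          have : ν (s k) = ν (s k ∩ A) + ν (s k ∩ Aᶜ) := by
            conv_lhs => rw [← Set.inter_union_compl (s k) A]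
            exact ν.of_union hdAB ((hmeas k).inter hA) ((hmeas k).inter hA.compl)
          rw [this]
          exact_mod_cast nnnorm_add_le _ _
      _ = (∑' k, (‖ν (s k ∩ A)‖₊ : ℝ≥0∞)) + ∑' k, (‖ν (s k ∩ Aᶜ)‖₊ : ℝ≥0∞) :=
          ENNReal.tsum_add
      _ ≤ chargeVariation ν A + chargeVariation ν Aᶜ := by
          refine add_le_add ?_ ?_
          · exact hle A _ hd1 (fun k => (hmeas k).inter hA)
              (fun k => Set.inter_subset_right)
          · exact hle Aᶜ _ hd2 (fun k => (hmeas k).inter hA.compl)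
              (fun k => Set.inter_subset_right)
  constructor
  · intro h A hA
    refine le_antisymm (hupper A hA) ?_
    by_contra hlt
    push_neg at hlt
    have hfinAc : (∫⁻ t in Icc a b ∩ γ ⁻¹' Aᶜ, ‖γ' t‖₊) ≠ ∞ :=
      ne_top_of_le_ne_top hfin (lintegral_mono_set Set.inter_subset_left)
    have key : (∫⁻ t in Icc a b ∩ γ ⁻¹' A, ‖γ' t‖₊) + (∫⁻ t in Icc a b ∩ γ ⁻¹' Aᶜ, ‖γ' t‖₊)
        ≤ chargeVariation ν A + chargeVariation ν Aᶜ := by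
      rw [hsplit A hA, ← h]
      exact hsuper A hA
    have : chargeVariation ν A + chargeVariation ν Aᶜ
        < (∫⁻ t in Icc a b ∩ γ ⁻¹' A, ‖γ' t‖₊) + (∫⁻ t in Icc a b ∩ γ ⁻¹' Aᶜ, ‖γ' t‖₊) :=
      lt_of_le_of_lt (add_le_add le_rfl (hupper Aᶜ hA.compl))
        (ENNReal.add_lt_add_right hfinAc hlt)
    exact absurd key (not_le.2 this)
  · intro h
    have := h Set.univ MeasurableSet.univ
    simpa using this
end

section
/- For every continuous compactly supported vector field φ : ℝⁿ → ℝⁿ, the map K_ℓ → ℝ given by γ ↦ ⟨[γ], φ⟩ = ∫_{[0,ℓ]} ⟨φ(γ(t)), γ̇(t)⟩ dt is continuous with respect to the uniform norm on K_ℓ, and it extends continuously to the compactification K̂_ℓ with value 0 at the constant curve ∞. -/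
/-!
For a `K`-Lipschitz field `ψ` bounded by `B`, integration by parts moves the derivative off the
difference `γ₁ - γ₂` of two 1-Lipschitz curves, which gives
`|⟨[γ₁], ψ⟩ - ⟨[γ₂], ψ⟩| ≤ 2 (K ℓ + B) ‖γ₁ - γ₂‖∞`. Mollification approximates a continuous
compactly supported `φ` uniformly by such fields, and `|⟨[γ], φ - ψ⟩| ≤ ℓ ‖φ - ψ‖∞`, so
`γ ↦ ⟨[γ], φ⟩` is a uniform limit of continuous functions.

In `C([0,ℓ], ℝⁿ ∪ {∞})` a limit of 1-Lipschitz curves is either a 1-Lipschitz curve or the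
constant `∞`, and `K_ℓ` sits in it as a subspace. A curve of length `ℓ` starting far out misses
`supp φ`, so the action vanishes near the constant `∞`.
-/

open MeasureTheory Set OnePoint
open scoped RealInnerProductSpace

/-- The extension of a curve `γ : [0,ℓ] → ℝⁿ` to `ℝ` by the projection onto `[0,ℓ]`. -/
noncomputable def curveExt {n : ℕ} {ℓ : ℝ} (hℓ : 0 ≤ ℓ)
    (γ : C(Set.Icc (0:ℝ) ℓ, EuclideanSpace ℝ (Fin n))) : ℝ → EuclideanSpace ℝ (Fin n) :=
  fun t => γ (Set.projIcc 0 ℓ hℓ t)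

/-- The action `⟨[γ], φ⟩ = ∫_{[0,ℓ]} ⟪φ(γ(t)), γ̇(t)⟫ dt` of the charge `[γ]` on a vector
field `φ`. -/
noncomputable def curveAction {n : ℕ} {ℓ : ℝ} (hℓ : 0 ≤ ℓ)
    (φ : EuclideanSpace ℝ (Fin n) → EuclideanSpace ℝ (Fin n))
    (γ : C(Set.Icc (0:ℝ) ℓ, EuclideanSpace ℝ (Fin n))) : ℝ :=
  ∫ t in Set.Icc (0:ℝ) ℓ, ⟪φ (curveExt hℓ γ t), deriv (curveExt hℓ γ) t⟫

open Function Topology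
open scoped NNReal Convolution

theorem HasCompactSupport.exists_lipschitzWith_dist_le {E F : Type*} [NormedAddCommGroup E]
    [NormedSpace ℝ E] [FiniteDimensional ℝ E] [MeasurableSpace E] [BorelSpace E]
    [NormedAddCommGroup F] [NormedSpace ℝ F] [CompleteSpace F] {f : E → F}
    (hf : Continuous f) (hfc : HasCompactSupport f) {ε : ℝ} (hε : 0 < ε) :
    ∃ g : E → F, (∃ K, LipschitzWith K g) ∧ HasCompactSupport g ∧ ∀ x, dist (g x) (f x) ≤ ε := by
  obtain ⟨δ, hδ, hfδ⟩ :=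
    Metric.uniformContinuous_iff.1 (hfc.uniformContinuous_of_continuous hf) ε hε
  obtain ⟨ρ, rfl⟩ : ∃ ρ : ContDiffBump (0 : E), ρ.rOut = δ :=
    ⟨⟨δ / 2, δ, half_pos hδ, half_lt_self hδ⟩, rfl⟩
  let μ : Measure E := .addHaar
  have hρ : HasCompactSupport (ρ.normed μ) := ρ.hasCompactSupport_normed
  have hc := hρ.convolution (ContinuousLinearMap.lsmul ℝ ℝ) hfc (μ := μ)
  have hd : ContDiff ℝ 1 (ρ.normed μ ⋆[ContinuousLinearMap.lsmul ℝ ℝ, μ] f) :=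
    hρ.contDiff_convolution_left _ ρ.contDiff_normed hf.locallyIntegrable
  refine ⟨_, hd.lipschitzWith_of_hasCompactSupport hc one_ne_zero, hc, fun x => ?_⟩
  exact ρ.dist_normed_convolution_le hf.aestronglyMeasurable fun y hy => (hfδ hy).le

section InnerProduct

variable {E : Type*} [NormedAddCommGroup E] [InnerProductSpace ℝ E]

theorem norm_inner_le_of_norm_le {x y : E} {a b : ℝ} (hx : ‖x‖ ≤ a) (hy : ‖y‖ ≤ b) :
    ‖⟪x, y⟫‖ ≤ a * b :=
  (norm_inner_le_norm x y).trans (mul_le_mul hx hy (norm_nonneg _) ((norm_nonneg _).trans hx))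

variable [FiniteDimensional ℝ E]

theorem IsCompact.integrableOn_inner_deriv {s : Set ℝ} (hs : IsCompact s) {f g : ℝ → E}
    (hf : Continuous f) {K : ℝ≥0} (hg : LipschitzWith K g) :
    IntegrableOn (fun t => ⟪f t, deriv g t⟫) s := by
  obtain ⟨C, hC⟩ := hs.exists_bound_of_continuousOn hf.continuousOn
  refine Integrable.mono' (integrableOn_const (C := C * K) hs.measure_lt_top.ne)
    (hf.aestronglyMeasurable.inner (stronglyMeasurable_deriv g).aestronglyMeasurable) ?_
  filter_upwards [ae_restrict_mem₀ hs.measurableSet.nullMeasurableSet] with t ht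
  exact norm_inner_le_of_norm_le (hC t ht) (norm_deriv_le_of_lipschitz hg)

theorem LipschitzWith.integral_inner_deriv_eq_sub {f g : ℝ → E} {Kf Kg : ℝ≥0}
    (hf : LipschitzWith Kf f) (hg : LipschitzWith Kg g) (a b : ℝ) :
    ∫ t in a..b, ⟪f t, deriv g t⟫ = ⟪f b, g b⟫ - ⟪f a, g a⟫ - ∫ t in a..b, ⟪deriv f t, g t⟫ := by
  obtain ⟨K, hK⟩ := ((contDiff_inner (𝕜 := ℝ) (n := 1)).locallyLipschitz.comp
    (hf.prodMk hg).locallyLipschitz).locallyLipschitzOn.exists_lipschitzOnWith_of_compact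
    (isCompact_uIcc (a := a) (b := b))
  have hftc := hK.absolutelyContinuousOnInterval.integral_deriv_eq_sub
  have hfg : IntervalIntegrable (fun t => ⟪f t, deriv g t⟫) volume a b :=
    (isCompact_uIcc.integrableOn_inner_deriv hf.continuous hg).intervalIntegrable
  have hfg' : IntervalIntegrable (fun t => ⟪deriv f t, g t⟫) volume a b := by
    simpa only [real_inner_comm] using
      (isCompact_uIcc.integrableOn_inner_deriv hg.continuous hf).intervalIntegrable
  rw [eq_sub_iff_add_eq, ← intervalIntegral.integral_add hfg hfg']
  simp only [comp_def] at hftc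
  rw [← hftc]
  refine intervalIntegral.integral_congr_ae ?_
  filter_upwards [hf.ae_differentiableAt, hg.ae_differentiableAt] with t hft hgt _
  rw [(hft.hasDerivAt.inner ℝ hgt.hasDerivAt).deriv, add_comm]

end InnerProduct

section CurveAction

variable {n : ℕ} {ℓ : ℝ} (hℓ : 0 ≤ ℓ) {γ γ₁ γ₂ : C(Icc (0:ℝ) ℓ, EuclideanSpace ℝ (Fin n))}
  {φ ψ : EuclideanSpace ℝ (Fin n) → EuclideanSpace ℝ (Fin n)}

theorem lipschitzWith_curveExt (hγ : LipschitzWith 1 γ) : LipschitzWith 1 (curveExt hℓ γ) := by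
  show LipschitzWith 1 (γ ∘ projIcc 0 ℓ hℓ)
  simpa using hγ.comp (LipschitzWith.projIcc hℓ)

theorem curveAction_eq_intervalIntegral :
    curveAction hℓ φ γ = ∫ t in 0..ℓ, ⟪φ (curveExt hℓ γ t), deriv (curveExt hℓ γ) t⟫ := by
  rw [curveAction, integral_Icc_eq_integral_Ioc, intervalIntegral.integral_of_le hℓ]

theorem intervalIntegrable_inner_deriv_curveExt (hφ : Continuous φ) (hγ : LipschitzWith 1 γ) :
    IntervalIntegrable (fun t => ⟪φ (curveExt hℓ γ t), deriv (curveExt hℓ γ) t⟫) volume 0 ℓ :=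
  have he := lipschitzWith_curveExt hℓ hγ
  (isCompact_uIcc.integrableOn_inner_deriv (hφ.comp he.continuous) he).intervalIntegrable

theorem curveAction_eq_zero_of_forall_notMem_tsupport (h : ∀ s, γ s ∉ tsupport φ) :
    curveAction hℓ φ γ = 0 := by
  simp [curveAction, curveExt, image_eq_zero_of_notMem_tsupport (h _)]

theorem norm_deriv_curveExt_le_one (hγ : LipschitzWith 1 γ) (t : ℝ) :
    ‖deriv (curveExt hℓ γ) t‖ ≤ 1 := by
  simpa using norm_deriv_le_of_lipschitz (lipschitzWith_curveExt hℓ hγ) (x₀ := t)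

theorem abs_curveAction_sub_le_of_dist_le {ε : ℝ} (hφ : Continuous φ) (hψ : Continuous ψ)
    (hφψ : ∀ x, dist (φ x) (ψ x) ≤ ε) (hγ : LipschitzWith 1 γ) :
    |curveAction hℓ φ γ - curveAction hℓ ψ γ| ≤ ε * ℓ := by
  rw [curveAction_eq_intervalIntegral, curveAction_eq_intervalIntegral,
    ← intervalIntegral.integral_sub (intervalIntegrable_inner_deriv_curveExt hℓ hφ hγ)
      (intervalIntegrable_inner_deriv_curveExt hℓ hψ hγ), ← Real.norm_eq_abs]
  refine (intervalIntegral.norm_integral_le_of_norm_le_const fun t _ => ?_).trans_eq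
    (by rw [sub_zero, abs_of_nonneg hℓ])
  rw [← inner_sub_left, ← mul_one ε]
  exact norm_inner_le_of_norm_le ((dist_eq_norm _ _).symm.trans_le (hφψ _))
    (norm_deriv_curveExt_le_one hℓ hγ t)

theorem abs_curveAction_sub_le_mul_dist {K : ℝ≥0} {B : ℝ} (hψ : LipschitzWith K ψ)
    (hB : ∀ x, ‖ψ x‖ ≤ B) (hγ₁ : LipschitzWith 1 γ₁) (hγ₂ : LipschitzWith 1 γ₂) :
    |curveAction hℓ ψ γ₁ - curveAction hℓ ψ γ₂| ≤ 2 * (K * ℓ + B) * dist γ₁ γ₂ := by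
  set e₁ := curveExt hℓ γ₁
  set e₂ := curveExt hℓ γ₂
  set D := dist γ₁ γ₂
  have he₁ : LipschitzWith 1 e₁ := lipschitzWith_curveExt hℓ hγ₁
  have he₂ : LipschitzWith 1 e₂ := lipschitzWith_curveExt hℓ hγ₂
  have hψe₂ : LipschitzWith K (fun t => ψ (e₂ t)) := by simpa [comp_def] using hψ.comp he₂
  have hδ : LipschitzWith 2 (fun t => e₁ t - e₂ t) := by
    simpa [one_add_one_eq_two] using he₁.sub he₂
  have hD : ∀ t, ‖e₁ t - e₂ t‖ ≤ D := fun t =>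
    (dist_eq_norm _ _).symm.trans_le (ContinuousMap.dist_apply_le_dist _)
  have hsplit : curveAction hℓ ψ γ₁ - curveAction hℓ ψ γ₂ =
      (∫ t in 0..ℓ, ⟪ψ (e₁ t) - ψ (e₂ t), deriv e₁ t⟫) +
        ∫ t in 0..ℓ, ⟪ψ (e₂ t), deriv (fun t => e₁ t - e₂ t) t⟫ := by
    rw [curveAction_eq_intervalIntegral, curveAction_eq_intervalIntegral,
      ← intervalIntegral.integral_sub (intervalIntegrable_inner_deriv_curveExt hℓ hψ.continuous hγ₁)
        (intervalIntegrable_inner_deriv_curveExt hℓ hψ.continuous hγ₂),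
      ← intervalIntegral.integral_add
        (isCompact_uIcc.integrableOn_inner_deriv (f := fun t => ψ (e₁ t) - ψ (e₂ t))
          ((hψ.continuous.comp he₁.continuous).sub hψe₂.continuous) he₁).intervalIntegrable
        (isCompact_uIcc.integrableOn_inner_deriv hψe₂.continuous hδ).intervalIntegrable]
    refine intervalIntegral.integral_congr_ae ?_
    filter_upwards [he₁.ae_differentiableAt, he₂.ae_differentiableAt] with t h₁ h₂ _
    rw [deriv_fun_sub h₁ h₂, inner_sub_left, inner_sub_right]
    ring
  have hfield : ‖∫ t in 0..ℓ, ⟪ψ (e₁ t) - ψ (e₂ t), deriv e₁ t⟫‖ ≤ K * D * 1 * ℓ := by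
    refine (intervalIntegral.norm_integral_le_of_norm_le_const fun t _ => ?_).trans_eq
      (by rw [sub_zero, abs_of_nonneg hℓ])
    refine norm_inner_le_of_norm_le ?_ (norm_deriv_curveExt_le_one hℓ hγ₁ t)
    rw [← dist_eq_norm]
    exact hψ.dist_le_mul_of_le (by rw [dist_eq_norm]; exact hD t)
  have hboundary : ∀ t, ‖⟪ψ (e₂ t), e₁ t - e₂ t⟫‖ ≤ B * D := fun t =>
    norm_inner_le_of_norm_le (hB _) (hD t)
  have hvelocity : ‖∫ t in 0..ℓ, ⟪deriv (fun t => ψ (e₂ t)) t, e₁ t - e₂ t⟫‖ ≤ K * D * ℓ := by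
    refine (intervalIntegral.norm_integral_le_of_norm_le_const fun t _ => ?_).trans_eq
      (by rw [sub_zero, abs_of_nonneg hℓ])
    exact norm_inner_le_of_norm_le (norm_deriv_le_of_lipschitz hψe₂) (hD t)
  rw [hsplit, hψe₂.integral_inner_deriv_eq_sub hδ, ← Real.norm_eq_abs]
  calc _ ≤ K * D * 1 * ℓ + (B * D + B * D + K * D * ℓ) := by
        refine (norm_add_le _ _).trans (add_le_add hfield ?_)
        exact (norm_sub_le _ _).trans (add_le_add ((norm_sub_le _ _).trans
          (add_le_add (hboundary ℓ) (hboundary 0))) hvelocity)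
    _ = 2 * (K * ℓ + B) * D := by ring

theorem continuous_curveAction (hφ : Continuous φ) (hφc : HasCompactSupport φ) :
    Continuous fun γ : {γ : C(Icc (0:ℝ) ℓ, EuclideanSpace ℝ (Fin n)) // LipschitzWith 1 γ} =>
      curveAction hℓ φ γ.1 := by
  refine continuous_of_uniform_approx_of_continuous fun u hu => ?_
  obtain ⟨ε, hε, hεu⟩ := Metric.mem_uniformity_dist.1 hu
  obtain ⟨ψ, ⟨K, hψ⟩, hψc, hψφ⟩ :=
    hφc.exists_lipschitzWith_dist_le hφ (ε := ε / (ℓ + 1)) (by positivity)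
  obtain ⟨B, hB⟩ := hψ.continuous.bounded_above_of_compact_support hψc
  refine ⟨fun γ => curveAction hℓ ψ γ.1, ?_, fun γ => hεu ?_⟩
  · exact (LipschitzWith.of_dist_le' fun γ₁ γ₂ =>
      abs_curveAction_sub_le_mul_dist hℓ hψ hB γ₁.2 γ₂.2).continuous
  · calc dist _ _ ≤ ε / (ℓ + 1) * ℓ := abs_curveAction_sub_le_of_dist_le hℓ hφ hψ.continuous
          (fun x => by rw [dist_comm]; exact hψφ x) γ.2
      _ < ε := by rw [div_mul_eq_mul_div, div_lt_iff₀ (by positivity)]; nlinarith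

end CurveAction

section OnePointCompactification

variable {T X : Type*} [PseudoMetricSpace T] [MetricSpace X]

variable (T X) in
def lipschitzOnePointMaps : Set C(T, OnePoint X) :=
  {g | ∃ γ : C(T, X), LipschitzWith 1 γ ∧
    g = (⟨(↑·), OnePoint.continuous_coe⟩ : C(X, OnePoint X)).comp γ}

variable [ProperSpace X]

theorem exists_eq_coe_dist_le_of_mem_closure_lipschitzOnePointMaps {g : C(T, OnePoint X)}
    (hg : g ∈ closure (lipschitzOnePointMaps T X)) {s : T} {x : X} (hs : g s = x) (t : T)
    {ε : ℝ} (hε : 0 < ε) : ∃ y : X, g t = y ∧ dist y x ≤ dist t s + ε := by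
  let O : Set C(T, OnePoint X) := {h | h s ∈ ((↑) : X → OnePoint X) '' Metric.ball x ε}
  let C : Set C(T, OnePoint X) :=
    {h | h t ∈ ((↑) : X → OnePoint X) '' Metric.closedBall x (dist t s + ε)}
  have hO : IsOpen O :=
    (isOpenEmbedding_coe.isOpenMap _ Metric.isOpen_ball).preimage (continuous_eval_const s)
  have hC : IsClosed C :=
    (isClosed_image_coe.2 ⟨Metric.isClosed_closedBall, isCompact_closedBall _ _⟩).preimage
      (continuous_eval_const t)
  have hOC : O ∩ lipschitzOnePointMaps T X ⊆ C := by
    rintro _ ⟨⟨x', hx', hx's⟩, γ, hγ, rfl⟩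
    obtain rfl : x' = γ s := coe_injective hx's
    refine ⟨γ t, ?_, rfl⟩
    calc dist (γ t) x ≤ dist (γ t) (γ s) + dist (γ s) x := dist_triangle _ _ _
      _ ≤ dist t s + ε := add_le_add (by simpa using hγ.dist_le_mul t s) (Metric.mem_ball.1 hx').le
  have hgO : g ∈ O := ⟨x, Metric.mem_ball_self hε, hs.symm⟩
  obtain ⟨y, hy, hyt⟩ := closure_minimal hOC hC (hO.inter_closure ⟨hgO, hg⟩)
  exact ⟨y, hyt.symm, hy⟩

theorem closure_lipschitzOnePointMaps_subset :
    closure (lipschitzOnePointMaps T X) ⊆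
      insert (ContinuousMap.const T ∞) (lipschitzOnePointMaps T X) := by
  intro g hg
  by_cases hfin : ∀ s, g s ≠ ∞
  · choose γ hγ using fun s => ne_infty_iff_exists.1 (hfin s)
    have hlip : LipschitzWith 1 γ := LipschitzWith.of_dist_le_mul fun s t => by
      rw [NNReal.coe_one, one_mul]
      refine le_of_forall_pos_le_add fun ε hε => ?_
      obtain ⟨y, hy, hyd⟩ :=
        exists_eq_coe_dist_le_of_mem_closure_lipschitzOnePointMaps hg (hγ t).symm s hε
      rwa [← coe_injective ((hγ s).trans hy)] at hyd
    exact Or.inr ⟨⟨γ, hlip.continuous⟩, hlip, ContinuousMap.ext fun s => (hγ s).symm⟩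
  · obtain ⟨t₀, ht₀⟩ := not_forall_not.1 hfin
    refine Or.inl (ContinuousMap.ext fun s => ?_)
    by_contra hs
    obtain ⟨x, hx⟩ := ne_infty_iff_exists.1 hs
    obtain ⟨y, hy, -⟩ :=
      exists_eq_coe_dist_le_of_mem_closure_lipschitzOnePointMaps hg hx.symm t₀ one_pos
    exact infty_ne_coe y (ht₀.symm.trans hy)

theorem exists_continuousOn_closure_lipschitzOnePointMaps {t₀ : T} {r : ℝ}
    (hr : ∀ s, dist s t₀ ≤ r) {C : Set X} (hC : IsCompact C)
    {A : {γ : C(T, X) // LipschitzWith 1 γ} → ℝ} (hA : Continuous A)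
    (hA₀ : ∀ γ, (∀ s, γ.1 s ∉ C) → A γ = 0) :
    ∃ F : C(T, OnePoint X) → ℝ, ContinuousOn F (closure (lipschitzOnePointMaps T X)) ∧
      (∀ (γ : C(T, X)) (hγ : LipschitzWith 1 γ),
        F ((⟨(↑·), OnePoint.continuous_coe⟩ : C(X, OnePoint X)).comp γ) = A ⟨γ, hγ⟩) ∧
      F (ContinuousMap.const T ∞) = 0 := by
  let i : C(X, OnePoint X) := ⟨(↑·), OnePoint.continuous_coe⟩
  let Φ : {γ : C(T, X) // LipschitzWith 1 γ} → C(T, OnePoint X) := fun γ => i.comp γ.1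
  have hΦ : IsEmbedding Φ :=
    (ContinuousMap.isEmbedding_postcomp i isOpenEmbedding_coe.isEmbedding).comp
      IsEmbedding.subtypeVal
  have hrange : lipschitzOnePointMaps T X = range Φ := by
    ext g
    simp [lipschitzOnePointMaps, Φ, i, eq_comm]
  have hclosure := hrange ▸ closure_lipschitzOnePointMaps_subset (T := T) (X := X)
  have hinfty : ContinuousMap.const T ∞ ∉ range Φ := fun ⟨γ, hγ⟩ =>
    infty_ne_coe (γ.1 t₀) (congrArg (· t₀) hγ).symm
  have hFinfty : extend Φ A 0 (ContinuousMap.const T ∞) = 0 :=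
    extend_apply' _ _ _ fun ⟨γ, hγ⟩ => hinfty ⟨γ, hγ⟩
  refine ⟨extend Φ A 0, ?_, fun γ hγ => hΦ.injective.extend_apply _ _ ⟨γ, hγ⟩, hFinfty⟩
  rw [hrange]
  intro g hg
  rcases hclosure hg with rfl | ⟨γ, rfl⟩
  · -- A curve starting outside the `r`-thickening of `C` never meets `C`.
    have hV : {h : C(T, OnePoint X) | h t₀ ∉ ((↑) : X → OnePoint X) '' Metric.cthickening r C} ∈
        𝓝 (ContinuousMap.const T ∞) :=
      ((isClosed_image_coe.2 ⟨Metric.isClosed_cthickening, hC.cthickening⟩).isOpen_compl.preimage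
        (continuous_eval_const t₀)).mem_nhds infty_notMem_image_coe
    have hev : ∀ᶠ h in 𝓝[closure (range Φ)] ContinuousMap.const T ∞, 0 = extend Φ A 0 h := by
      filter_upwards [nhdsWithin_le_nhds hV, self_mem_nhdsWithin] with h hhV hh
      rcases hclosure hh with rfl | ⟨γ, rfl⟩
      · exact hFinfty.symm
      rw [hΦ.injective.extend_apply, hA₀ γ fun s hs => hhV ⟨γ.1 t₀, ?_, rfl⟩]
      refine Metric.mem_cthickening_of_dist_le _ _ _ _ hs ?_
      calc dist (γ.1 t₀) (γ.1 s) ≤ dist t₀ s := by simpa using γ.2.dist_le_mul t₀ s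
        _ ≤ r := dist_comm t₀ s ▸ hr s
    rw [ContinuousWithinAt, hFinfty]
    exact tendsto_const_nhds.congr' hev
  · have hW : {h : C(T, OnePoint X) | h t₀ ≠ ∞} ∈ 𝓝 (Φ γ) :=
      (isOpen_compl_singleton.preimage (continuous_eval_const t₀)).mem_nhds (coe_ne_infty _)
    have hsub : closure (range Φ) ∩ {h | h t₀ ≠ ∞} ⊆ range Φ := fun h ⟨hh, hh₀⟩ =>
      (hclosure hh).resolve_left fun hinf => hh₀ (by rw [hinf]; rfl)
    have hcont : ContinuousOn (extend Φ A 0) (range Φ) := by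
      rw [← image_univ, hΦ.isInducing.continuousOn_image_iff, extend_comp hΦ.injective]
      exact hA.continuousOn
    exact (continuousWithinAt_inter hW).1 ((hcont _ (mem_range_self γ)).mono hsub)

end OnePointCompactification

/-- for a continuous compactly supported vector field `φ`, the map
`γ ↦ ⟨[γ], φ⟩` is continuous on `K_ℓ` (uniform norm), and it extends continuously to the
compactification `K̂_ℓ` with value `0` at the constant curve `∞`. -/
theorem curveAction_continuous {n : ℕ} (ℓ : ℝ) (hℓ : 0 < ℓ)
    (φ : EuclideanSpace ℝ (Fin n) → EuclideanSpace ℝ (Fin n))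
    (hφ : Continuous φ) (hφc : HasCompactSupport φ) :
    Continuous (fun γ : {γ : C(Set.Icc (0:ℝ) ℓ, EuclideanSpace ℝ (Fin n)) //
        LipschitzWith 1 γ} => curveAction hℓ.le φ γ.1) ∧
    (let i : C(EuclideanSpace ℝ (Fin n), OnePoint (EuclideanSpace ℝ (Fin n))) :=
        ⟨(↑·), OnePoint.continuous_coe⟩
      let S : Set C(Set.Icc (0:ℝ) ℓ, OnePoint (EuclideanSpace ℝ (Fin n))) :=
        {g | ∃ γ : C(Set.Icc (0:ℝ) ℓ, EuclideanSpace ℝ (Fin n)),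
          LipschitzWith 1 γ ∧ g = i.comp γ}
      ∃ F : C(Set.Icc (0:ℝ) ℓ, OnePoint (EuclideanSpace ℝ (Fin n))) → ℝ,
        ContinuousOn F (closure S) ∧
        (∀ γ : C(Set.Icc (0:ℝ) ℓ, EuclideanSpace ℝ (Fin n)), LipschitzWith 1 γ →
          F (i.comp γ) = curveAction hℓ.le φ γ) ∧
        F (ContinuousMap.const _ (∞ : OnePoint (EuclideanSpace ℝ (Fin n)))) = 0) := by
  have hA := continuous_curveAction hℓ.le hφ hφc
  refine ⟨hA, ?_⟩
  have hdist : ∀ s : Icc (0:ℝ) ℓ, dist s ⟨0, le_rfl, hℓ.le⟩ ≤ ℓ := fun s =>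
    (Real.dist_le_of_mem_Icc s.2 ⟨le_rfl, hℓ.le⟩).trans_eq (sub_zero ℓ)
  exact exists_continuousOn_closure_lipschitzOnePointMaps hdist hφc.isCompact hA fun γ => curveAction_eq_zero_of_forall_notMem_tsupport hℓ.le
end

section
/- Let μ be an n-dimensional charge whose divergence is a finite signed measure, and define the (n+1)-dimensional charge μ⁺ = (μ ⊗ (δ₀ − δ_ℓ), −Div(μ) ⊗ λ¹|_{[0,ℓ]}). Then Div(μ⁺) = 0, and the restriction of μ⁺ to the hyperplane ℝⁿ × {0} recovers μ: π∘μ⁺(A × {0}) = μ(A) for Borel A ⊆ ℝⁿ, where π projects onto the first n coordinates. -/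
open MeasureTheory Set
open scoped ENNReal

section Aux

variable {n : ℕ}

local notation "E" => EuclideanSpace ℝ (Fin n)

lemma slice_compactSupport {ψ : E × ℝ → ℝ} (hs : HasCompactSupport ψ) (c : ℝ) :
    HasCompactSupport (fun x : E => ψ (x, c)) := by
  apply IsCompact.of_isClosed_subset (hs.image continuous_fst) (isClosed_tsupport _)
  refine closure_minimal ?_ (hs.image continuous_fst).isClosed
  intro x hx
  exact ⟨(x, c), subset_tsupport _ hx, rfl⟩

lemma slice_fderiv {ψ : E × ℝ → ℝ} (hψ : ContDiff ℝ (⊤ : ℕ∞) ψ) (c : ℝ) (x v : E) :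
    fderiv ℝ (fun y : E => ψ (y, c)) x v = fderiv ℝ ψ (x, c) (v, 0) := by
  have h1 : HasFDerivAt (fun y : E => (y, c)) (ContinuousLinearMap.inl ℝ E ℝ) x :=
    hasFDerivAt_prodMk_left x c
  have h2 : HasFDerivAt ψ (fderiv ℝ ψ (x, c)) (x, c) :=
    (hψ.differentiable (by simp) (x, c)).hasFDerivAt
  have h3 := (h2.comp x h1).fderiv
  rw [show (fun y : E => ψ (y, c)) = ψ ∘ (fun y : E => (y, c)) from rfl, h3]
  rfl

lemma vert_hasDerivAt {ψ : E × ℝ → ℝ} (hψ : ContDiff ℝ (⊤ : ℕ∞) ψ) (x : E) (t : ℝ) :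
    HasDerivAt (fun s : ℝ => ψ (x, s)) (fderiv ℝ ψ (x, t) ((0 : E), (1 : ℝ))) t := by
  have h1 : HasDerivAt (fun s : ℝ => ((x : E), s)) ((0 : E), (1 : ℝ)) t :=
    (hasDerivAt_const t x).prodMk (hasDerivAt_id t)
  exact ((hψ.differentiable (by simp) (x, t)).hasFDerivAt).comp_hasDerivAt t h1

lemma vert_continuous {ψ : E × ℝ → ℝ} (hψ : ContDiff ℝ (⊤ : ℕ∞) ψ) :
    Continuous (fun p : E × ℝ => fderiv ℝ ψ p ((0 : E), (1 : ℝ))) :=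
  (hψ.continuous_fderiv (by simp)).clm_apply continuous_const

lemma vert_compactSupport {ψ : E × ℝ → ℝ} (hs : HasCompactSupport ψ) :
    HasCompactSupport (fun p : E × ℝ => fderiv ℝ ψ p ((0 : E), (1 : ℝ))) :=
  HasCompactSupport.comp_left (g := fun L : (E × ℝ) →L[ℝ] ℝ => L ((0 : E), (1 : ℝ)))
    (hs.fderiv (𝕜 := ℝ)) rfl

lemma cont_param (σ : Measure E) [IsFiniteMeasure σ] {ψ : E × ℝ → ℝ}
    (hψ : ContDiff ℝ (⊤ : ℕ∞) ψ) (hs : HasCompactSupport ψ) :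
    Continuous (fun t : ℝ => ∫ x, fderiv ℝ ψ (x, t) ((0 : E), (1 : ℝ)) ∂σ) := by
  obtain ⟨C, hC⟩ := (vert_compactSupport hs).exists_bound_of_continuous (vert_continuous hψ)
  apply continuous_of_dominated (bound := fun _ : E => C)
  · exact fun t => ((vert_continuous hψ).comp
      (continuous_id.prodMk continuous_const)).aestronglyMeasurable
  · exact fun t => ae_of_all _ fun x => hC (x, t)
  · exact integrable_const C
  · exact ae_of_all _ fun x => (vert_continuous hψ).comp
      (continuous_const.prodMk continuous_id)

lemma fubini_ftc (ℓ : ℝ) (hℓ : 0 < ℓ) (σ : Measure E) [IsFiniteMeasure σ]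
    {ψ : E × ℝ → ℝ} (hψ : ContDiff ℝ (⊤ : ℕ∞) ψ) (hs : HasCompactSupport ψ) :
    ∫ t in (0:ℝ)..ℓ, ∫ x, fderiv ℝ ψ (x, t) ((0 : E), (1 : ℝ)) ∂σ =
      (∫ x, ψ (x, ℓ) ∂σ) - ∫ x, ψ (x, 0) ∂σ := by
  obtain ⟨C, hC⟩ := (vert_compactSupport hs).exists_bound_of_continuous (vert_continuous hψ)
  have hint : Integrable (Function.uncurry fun t (x : E) => fderiv ℝ ψ (x, t) ((0 : E), (1 : ℝ)))
      ((volume.restrict (Set.Ioc (0:ℝ) ℓ)).prod σ) := by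
    have hm : Continuous (Function.uncurry fun t (x : E) =>
        fderiv ℝ ψ (x, t) ((0 : E), (1 : ℝ))) :=
      (vert_continuous hψ).comp (continuous_snd.prodMk continuous_fst)
    exact (integrable_const C).mono' hm.aestronglyMeasurable
      (ae_of_all _ fun p => hC (p.2, p.1))
  rw [intervalIntegral.integral_of_le hℓ.le, MeasureTheory.integral_integral_swap hint]
  have hinner : ∀ x : E, (∫ t in Set.Ioc (0:ℝ) ℓ, fderiv ℝ ψ (x, t) ((0 : E), (1 : ℝ))) =
      ψ (x, ℓ) - ψ (x, 0) := by
    intro x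
    rw [← intervalIntegral.integral_of_le hℓ.le]
    exact intervalIntegral.integral_eq_sub_of_hasDerivAt
      (fun t _ => vert_hasDerivAt hψ x t)
      (((vert_continuous hψ).comp (continuous_const.prodMk continuous_id)).intervalIntegrable 0 ℓ)
  simp_rw [hinner]
  exact integral_sub
    ((((hψ.comp (contDiff_id.prodMk contDiff_const)).continuous).integrable_of_hasCompactSupport
      (slice_compactSupport hs ℓ)))
    ((((hψ.comp (contDiff_id.prodMk contDiff_const)).continuous).integrable_of_hasCompactSupport
      (slice_compactSupport hs 0)))

end Aux

/-- let `μ = f·ρ` be a charge whose divergence is the finite signed measure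
`σp − σn`, and let `μ⁺ = (μ ⊗ (δ₀ − δ_ℓ), −Div(μ) ⊗ λ¹|_{[0,ℓ]})` be the associated
`(n+1)`-dimensional charge.  Then `Div(μ⁺) = 0` distributionally, and the restriction of
`μ⁺` to `ℝⁿ × {0}` recovers `μ`: the projection of `μ⁺(A × {0})` onto the first `n`
coordinates equals `μ(A)` for every Borel `A`. -/
theorem lifted_charge_divergence_free {n : ℕ} (ℓ : ℝ) (hℓ : 0 < ℓ)
    (ρ : Measure (EuclideanSpace ℝ (Fin n))) (hρfin : IsFiniteMeasure ρ)
    (f : EuclideanSpace ℝ (Fin n) → EuclideanSpace ℝ (Fin n))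
    (hfmeas : Measurable f) (hfnorm : ∀ x, ‖f x‖ = 1)
    (σp σn : Measure (EuclideanSpace ℝ (Fin n)))
    (hσp : IsFiniteMeasure σp) (hσn : IsFiniteMeasure σn)
    (hdiv : ∀ ψ : EuclideanSpace ℝ (Fin n) → ℝ, ContDiff ℝ (⊤ : ℕ∞) ψ → HasCompactSupport ψ →
      -∫ x, fderiv ℝ ψ x (f x) ∂ρ = (∫ x, ψ x ∂σp) - ∫ x, ψ x ∂σn) :
    (∀ ψ : EuclideanSpace ℝ (Fin n) × ℝ → ℝ, ContDiff ℝ (⊤ : ℕ∞) ψ → HasCompactSupport ψ →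
      ((∫ x, fderiv ℝ ψ (x, (0:ℝ)) (f x, (0:ℝ)) ∂ρ) -
        (∫ x, fderiv ℝ ψ (x, ℓ) (f x, (0:ℝ)) ∂ρ)) +
      (∫ t in (0:ℝ)..ℓ,
        ((∫ x, fderiv ℝ ψ (x, t) ((0:EuclideanSpace ℝ (Fin n)), (1:ℝ)) ∂σn) -
          ∫ x, fderiv ℝ ψ (x, t) ((0:EuclideanSpace ℝ (Fin n)), (1:ℝ)) ∂σp)) = 0) ∧
    (∀ A : Set (EuclideanSpace ℝ (Fin n)), MeasurableSet A →
      (∫ x, (Set.indicator (A ×ˢ ({0} : Set ℝ)) (fun _ => (1:ℝ)) (x, (0:ℝ)) -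
        Set.indicator (A ×ˢ ({0} : Set ℝ)) (fun _ => (1:ℝ)) (x, ℓ)) • f x ∂ρ) =
        ∫ x in A, f x ∂ρ) := by
  constructor
  · intro ψ hψ hs
    have key : ∀ c : ℝ, (∫ x, fderiv ℝ ψ (x, c) (f x, (0:ℝ)) ∂ρ)
        = (∫ x, ψ (x, c) ∂σn) - ∫ x, ψ (x, c) ∂σp := by
      intro c
      have h := hdiv (fun x => ψ (x, c)) (hψ.comp (contDiff_id.prodMk contDiff_const))
        (slice_compactSupport hs c)
      simp_rw [fun x => slice_fderiv hψ c x (f x)] at h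
      linarith
    rw [intervalIntegral.integral_sub
      ((cont_param σn hψ hs).intervalIntegrable 0 ℓ)
      ((cont_param σp hψ hs).intervalIntegrable 0 ℓ),
      fubini_ftc ℓ hℓ σn hψ hs, fubini_ftc ℓ hℓ σp hψ hs, key 0, key ℓ]
    ring
  · intro A hA
    have h1 : ∀ x : EuclideanSpace ℝ (Fin n),
        (Set.indicator (A ×ˢ ({0} : Set ℝ)) (fun _ => (1:ℝ)) (x, (0:ℝ)) -
          Set.indicator (A ×ˢ ({0} : Set ℝ)) (fun _ => (1:ℝ)) (x, ℓ)) • f x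
        = Set.indicator A f x := by
      intro x
      have hℓmem : (x, ℓ) ∉ A ×ˢ ({0} : Set ℝ) :=
        fun h => hℓ.ne' (Set.mem_singleton_iff.1 (Set.mem_prod.1 h).2)
      rw [Set.indicator_of_notMem hℓmem, sub_zero]
      by_cases hx : x ∈ A
      · have h0 : (x, (0:ℝ)) ∈ A ×ˢ ({0} : Set ℝ) := Set.mk_mem_prod hx rfl
        rw [Set.indicator_of_mem h0, Set.indicator_of_mem hx, one_smul]
      · rw [Set.indicator_of_notMem (fun h => hx (Set.mem_prod.1 h).1),
          Set.indicator_of_notMem hx, zero_smul]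
    simp_rw [h1]
    exact integral_indicator hA
end
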